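/- Let f ∈ S⁰_{m,L}, ρ ∈ (0,1], ν ∈ ℕ with ν ≥ 1, and define F̄_m(t,z) := ρ^{-t}·∇f_m(ρᵗ·z) and F̄^L(t,z) := ρ^{-t}·∇f^L(ρᵗ·z) for t ∈ ℕ and z ∈ ℝᵈ (with F̄^L(t,z) := 0 for t < 0). Then for every sequence z̄ : ℕ → ℝᵈ and every T ≥ 1, the sum ∑_{t=0}^{T-1} ⟨F̄_m(t, z̄_t), F̄^L(t, z̄_t) - ρ^ν · F̄^L(t-ν, z̄_{t-ν})⟩ is nonnegative (where terms with t - ν < 0 have F̄^L(t-ν, z̄_{t-ν}) = 0). -/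

import Mathlib

/-!
Put `g = f_m` and `κ = L - m`, so that `g` and `κ ‖·‖² / 2 - g = f^L` are convex. The first-order
inequality for `g` at `u`, combined with the quadratic upper bound for `g` at `y` evaluated at
`y - κ⁻¹ (∇g y - ∇g u)`, gives `κ (g u - g y) + ‖∇g u - ∇g y‖² / 2 ≤ κ ⟪∇g u, u - y⟫`; rearranged, this
is `V u - V y ≤ ⟪∇f_m u, ∇f^L u - ∇f^L y⟫` for `V = κ g - ‖∇g‖² / 2`, and `V ≥ V 0 = 0`.
With `u_t = ρ^t z_t` and `s = ρ^(2ν) ∈ [0, 1]`, the `t`-th term is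
`ρ^(-2t) ((1 - s) ⟪∇f_m u_t, ∇f^L u_t⟫ + s ⟪∇f_m u_t, ∇f^L u_t - ∇f^L u_(t-ν)⟫) ≥ W_t - W_(t-ν)`
for `W_t = ρ^(-2t) V u_t ≥ 0`, and such a delayed telescoping sum is nonnegative.
-/

open scoped RealInnerProductSpace

theorem ConvexOn.add_le_of_hasFDerivAt {F : Type*} [NormedAddCommGroup F] [NormedSpace ℝ F]
    {φ : F → ℝ} {φ' : F →L[ℝ] ℝ} {x : F} (hφ : ConvexOn ℝ Set.univ φ)
    (h : HasFDerivAt φ φ' x) (y : F) : φ x + φ' (y - x) ≤ φ y := by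
  have hline : HasDerivAt (φ ∘ AffineMap.lineMap (k := ℝ) x y) (φ' (y - x)) 0 :=
    h.comp_hasDerivAt_of_eq (0 : ℝ) AffineMap.hasDerivAt_lineMap (by simp)
  have := (hφ.comp_affineMap (AffineMap.lineMap x y)).le_slope_of_hasDerivAt
    (Set.mem_univ 0) (Set.mem_univ 1) one_pos hline
  simp only [map_sub, slope_def_field, Function.comp_apply, AffineMap.lineMap_apply_one,
    AffineMap.lineMap_apply_zero, sub_zero, div_one] at this
  rw [map_sub]; linarith

section InnerProductSpace
variable {E : Type*} [NormedAddCommGroup E] [InnerProductSpace ℝ E] [CompleteSpace E]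

theorem HasGradientAt.sub {f g : E → ℝ} {f' g' x : E} (hf : HasGradientAt f f' x)
    (hg : HasGradientAt g g' x) : HasGradientAt (fun y => f y - g y) (f' - g') x := by
  rw [hasGradientAt_iff_hasFDerivAt] at *
  rw [map_sub]
  exact hf.sub hg

theorem hasGradientAt_mul_half_norm_sq (c : ℝ) (x : E) :
    HasGradientAt (fun y => c * (‖y‖ ^ 2 / 2)) (c • x) x := by
  have hfun : (fun y : E => c * (‖y‖ ^ 2 / 2)) = fun y => c / 2 * ‖y‖ ^ 2 := by
    funext y; ring
  rw [hasGradientAt_iff_hasFDerivAt, hfun]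
  refine ((hasStrictFDerivAt_norm_sq x).hasFDerivAt.const_mul (c / 2)).congr_fderiv ?_
  ext y
  simp only [smul_apply, coe_innerSL_apply, nsmul_eq_mul, smul_eq_mul,
    InnerProductSpace.toDual_apply_apply, real_inner_smul_left]
  ring

theorem ConvexOn.add_inner_le_of_hasGradientAt {φ : E → ℝ} {φ' x : E}
    (hφ : ConvexOn ℝ Set.univ φ) (h : HasGradientAt φ φ' x) (y : E) :
    φ x + ⟪φ', y - x⟫ ≤ φ y :=
  hφ.add_le_of_hasFDerivAt (hasGradientAt_iff_hasFDerivAt.mp h) y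

theorem HasGradientAt.le_add_inner_add_of_convexOn {g : E → ℝ} {g' x : E}
    (hg : HasGradientAt g g' x) {κ : ℝ}
    (hκg : ConvexOn ℝ Set.univ (fun y => κ * (‖y‖ ^ 2 / 2) - g y)) (y : E) :
    g y ≤ g x + ⟪g', y - x⟫ + κ / 2 * ‖y - x‖ ^ 2 := by
  have h := hκg.add_inner_le_of_hasGradientAt ((hasGradientAt_mul_half_norm_sq κ x).sub hg) y
  have hy : ‖y - x‖ ^ 2 = ‖y‖ ^ 2 - 2 * ⟪y, x⟫ + ‖x‖ ^ 2 := norm_sub_sq_real y x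
  rw [inner_sub_left, real_inner_smul_left, inner_sub_right, real_inner_self_eq_norm_sq,
    real_inner_comm] at h
  linear_combination h - κ / 2 * hy

theorem ConvexOn.mul_sub_add_norm_sq_le {g : E → ℝ} {u y p q : E} (hgc : ConvexOn ℝ Set.univ g)
    (hu : HasGradientAt g p u) (hy : HasGradientAt g q y) {κ : ℝ} (hκ : 0 < κ)
    (hκg : ConvexOn ℝ Set.univ (fun y => κ * (‖y‖ ^ 2 / 2) - g y)) :
    κ * (g u - g y) + ‖p - q‖ ^ 2 / 2 ≤ κ * ⟪p, u - y⟫ := by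
  have hyu : ⟪p, y - u⟫ = -⟪p, u - y⟫ := by rw [← inner_neg_right, neg_sub]
  -- the minimiser of the quadratic upper bound of `g - ⟪p, ·⟫` around `y`
  set x := y - κ⁻¹ • (q - p) with hx
  have h1 := hgc.add_inner_le_of_hasGradientAt hu x
  have h2 := hy.le_add_inner_add_of_convexOn hκg x
  have hxu : x - u = (y - u) - κ⁻¹ • (q - p) := by rw [hx]; abel
  have hxy : x - y = -(κ⁻¹ • (q - p)) := by rw [hx]; abel
  rw [hxu, inner_sub_right, inner_smul_right, hyu] at h1
  rw [hxy, inner_neg_right, inner_smul_right, norm_neg, norm_smul, mul_pow, Real.norm_eq_abs,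
    sq_abs] at h2
  have hqp : ‖q - p‖ ^ 2 = ⟪q, q - p⟫ - ⟪p, q - p⟫ := by
    rw [← real_inner_self_eq_norm_sq, inner_sub_left]
  rw [norm_sub_rev]
  field_simp at h1 h2
  linarith

noncomputable def lyapunov (κ : ℝ) (g : E → ℝ) (x : E) : ℝ := κ * g x - ‖gradient g x‖ ^ 2 / 2

section Lyapunov
variable {g : E → ℝ} {κ : ℝ}

theorem gradient_mul_half_norm_sq_sub {x : E} (hg : DifferentiableAt ℝ g x) :
    gradient (fun y => κ * (‖y‖ ^ 2 / 2) - g y) x = κ • x - gradient g x :=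
  ((hasGradientAt_mul_half_norm_sq κ x).sub hg.hasGradientAt).gradient

theorem lyapunov_sub_le (hg : Differentiable ℝ g) (hgc : ConvexOn ℝ Set.univ g) (hκ : 0 < κ)
    (hκg : ConvexOn ℝ Set.univ (fun y => κ * (‖y‖ ^ 2 / 2) - g y)) (u y : E) :
    lyapunov κ g u - lyapunov κ g y ≤
      ⟪gradient g u, gradient (fun x => κ * (‖x‖ ^ 2 / 2) - g x) u -
        gradient (fun x => κ * (‖x‖ ^ 2 / 2) - g x) y⟫ := by
  have hco := hgc.mul_sub_add_norm_sq_le (hg u).hasGradientAt (hg y).hasGradientAt hκ hκg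
  set p := gradient g u
  set q := gradient g y
  have hpq : ‖p - q‖ ^ 2 = ‖p‖ ^ 2 - 2 * ⟪p, q⟫ + ‖q‖ ^ 2 := norm_sub_sq_real p q
  rw [gradient_mul_half_norm_sq_sub (hg u), gradient_mul_half_norm_sq_sub (hg y),
    show κ • u - p - (κ • y - q) = κ • (u - y) - (p - q) by rw [smul_sub]; abel]
  simp only [lyapunov, inner_sub_right, inner_smul_right, real_inner_self_eq_norm_sq] at hco ⊢
  linarith

theorem lyapunov_nonneg (hg : Differentiable ℝ g) (hgc : ConvexOn ℝ Set.univ g) (hκ : 0 < κ)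
    (hκg : ConvexOn ℝ Set.univ (fun y => κ * (‖y‖ ^ 2 / 2) - g y)) (hg0 : g 0 = 0)
    (hg'0 : gradient g 0 = 0) (x : E) : 0 ≤ lyapunov κ g x := by
  simpa [lyapunov, hg0, hg'0] using lyapunov_sub_le hg hgc hκ hκg 0 x

end Lyapunov

end InnerProductSpace

section Summation

theorem sum_range_delayed (W : ℕ → ℝ) (ν T : ℕ) :
    ∑ t ∈ Finset.range T, (if ν ≤ t then W (t - ν) else 0) = ∑ t ∈ Finset.range (T - ν), W t := by
  induction T with
  | zero => simp
  | succ T ih =>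
    rw [Finset.sum_range_succ, ih]
    split_ifs with h
    · rw [Nat.sub_add_comm h, Finset.sum_range_succ]
    · rw [Nat.sub_eq_zero_of_le (by omega : T + 1 ≤ ν), Nat.sub_eq_zero_of_le (by omega : T ≤ ν)]
      simp

theorem sum_range_nonneg_of_sub_delay_le {W a : ℕ → ℝ} (hW : ∀ t, 0 ≤ W t) (ν : ℕ)
    (h : ∀ t, W t - (if ν ≤ t then W (t - ν) else 0) ≤ a t) (T : ℕ) :
    0 ≤ ∑ t ∈ Finset.range T, a t := by
  have hsum := Finset.sum_le_sum fun t (_ : t ∈ Finset.range T) => h t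
  rw [Finset.sum_sub_distrib, sum_range_delayed] at hsum
  have hle : ∑ t ∈ Finset.range (T - ν), W t ≤ ∑ t ∈ Finset.range T, W t :=
    Finset.sum_le_sum_of_subset_of_nonneg (Finset.range_subset_range.mpr (Nat.sub_le T ν))
      fun t _ _ => hW t
  linarith

end Summation

section Delayed
variable {F : Type*} [NormedAddCommGroup F] [InnerProductSpace ℝ F] {G H : F → F} {V : F → ℝ}

theorem sub_mul_le_inner_sub_smul (hV : ∀ u y, V u - V y ≤ ⟪G u, H u - H y⟫) (hV0 : V 0 = 0)
    (hH0 : H 0 = 0) {s : ℝ} (hs0 : 0 ≤ s) (hs1 : s ≤ 1) (u y : F) :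
    V u - s * V y ≤ ⟪G u, H u - s • H y⟫ := by
  have hu : V u ≤ ⟪G u, H u⟫ := by simpa [hV0, hH0] using hV u 0
  have e : ⟪G u, H u - s • H y⟫ = (1 - s) * ⟪G u, H u⟫ + s * ⟪G u, H u - H y⟫ := by
    simp only [inner_sub_right, inner_smul_right]; ring
  rw [e]
  nlinarith [mul_le_mul_of_nonneg_left hu (sub_nonneg.mpr hs1),
    mul_le_mul_of_nonneg_left (hV u y) hs0]

theorem sum_inner_rescaled_delayed_nonneg (hV : ∀ u y, V u - V y ≤ ⟪G u, H u - H y⟫)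
    (hV_nonneg : ∀ x, 0 ≤ V x) (hV0 : V 0 = 0) (hH0 : H 0 = 0) {ρ : ℝ} (hρ0 : 0 < ρ)
    (hρ1 : ρ ≤ 1) (ν : ℕ) (z : ℕ → F) (T : ℕ) :
    0 ≤ ∑ t ∈ Finset.range T, ⟪(ρ ^ t)⁻¹ • G (ρ ^ t • z t), (ρ ^ t)⁻¹ • H (ρ ^ t • z t) -
      ρ ^ ν • (if ν ≤ t then (ρ ^ (t - ν))⁻¹ • H (ρ ^ (t - ν) • z (t - ν)) else 0)⟫ := by
  set u : ℕ → F := fun t => ρ ^ t • z t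
  refine sum_range_nonneg_of_sub_delay_le (W := fun t => ((ρ ^ t)⁻¹) ^ 2 * V (u t))
    (fun t => mul_nonneg (sq_nonneg _) (hV_nonneg _)) ν (fun t => ?_) T
  split_ifs with h
  · have hb : (ρ ^ (t - ν))⁻¹ = ρ ^ ν * (ρ ^ t)⁻¹ := by
      rw [← pow_sub_mul_pow ρ h]
      field_simp
    rw [hb]
    set a := (ρ ^ t)⁻¹
    set s := ρ ^ ν * ρ ^ ν
    have hs1 : s ≤ 1 := mul_le_one₀ (pow_le_one₀ hρ0.le hρ1) (by positivity)
      (pow_le_one₀ hρ0.le hρ1)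
    calc a ^ 2 * V (u t) - (ρ ^ ν * a) ^ 2 * V (u (t - ν))
        = a ^ 2 * (V (u t) - s * V (u (t - ν))) := by ring
      _ ≤ a ^ 2 * ⟪G (u t), H (u t) - s • H (u (t - ν))⟫ := by
        gcongr
        exact sub_mul_le_inner_sub_smul hV hV0 hH0 (by positivity) hs1 _ _
      _ = ⟪a • G (u t), a • H (u t) - ρ ^ ν • (ρ ^ ν * a) • H (u (t - ν))⟫ := by
        simp only [inner_sub_right, inner_smul_left, inner_smul_right, RCLike.conj_to_real]
        ring
  · rw [sub_zero]
    set a := (ρ ^ t)⁻¹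
    calc a ^ 2 * V (u t) ≤ a ^ 2 * ⟪G (u t), H (u t)⟫ := by
          gcongr
          simpa using sub_mul_le_inner_sub_smul hV hV0 hH0 le_rfl zero_le_one (u t) 0
      _ = ⟪a • G (u t), a • H (u t) - ρ ^ ν • 0⟫ := by
          simp only [smul_zero, sub_zero, inner_smul_left, inner_smul_right, RCLike.conj_to_real]
          ring

end Delayed

theorem delayed_dynamic_iqc_general
    (d : ℕ) (m L ρ : ℝ) (hmL : m < L) (hρ0 : 0 < ρ) (hρ1 : ρ ≤ 1)
    (ν : ℕ)
    (f : EuclideanSpace ℝ (Fin d) → ℝ) (hf : Differentiable ℝ f)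
    (hfm : ConvexOn ℝ Set.univ (fun x => f x - m * (‖x‖ ^ 2 / 2)))
    (hfL : ConvexOn ℝ Set.univ (fun x => L * (‖x‖ ^ 2 / 2) - f x))
    (hf0 : f 0 = 0) (hgrad0 : gradient f 0 = 0)
    (Fm FL : ℕ → EuclideanSpace ℝ (Fin d) → EuclideanSpace ℝ (Fin d))
    (hFm : ∀ t z, Fm t z =
      (ρ ^ t)⁻¹ • gradient (fun x => f x - m * (‖x‖ ^ 2 / 2)) (ρ ^ t • z))
    (hFL : ∀ t z, FL t z =
      (ρ ^ t)⁻¹ • gradient (fun x => L * (‖x‖ ^ 2 / 2) - f x) (ρ ^ t • z)) :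
    ∀ (zb : ℕ → EuclideanSpace ℝ (Fin d)) (T : ℕ), 1 ≤ T →
      0 ≤ ∑ t ∈ Finset.range T,
        ⟪Fm t (zb t), FL t (zb t) -
          ρ ^ ν • (if ν ≤ t then FL (t - ν) (zb (t - ν)) else 0)⟫ := by
  intro zb T _
  set g := fun x : EuclideanSpace ℝ (Fin d) => f x - m * (‖x‖ ^ 2 / 2)
  have hfL_eq : (fun x => L * (‖x‖ ^ 2 / 2) - f x) = fun x => (L - m) * (‖x‖ ^ 2 / 2) - g x := by
    funext x; ring
  rw [hfL_eq] at hfL hFL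
  have hκ : 0 < L - m := sub_pos.mpr hmL
  have hg' (x) : HasGradientAt g (gradient f x - m • x) x :=
    (hf x).hasGradientAt.sub (hasGradientAt_mul_half_norm_sq m x)
  have hg : Differentiable ℝ g := fun x => (hg' x).differentiableAt
  have hg0 : g 0 = 0 := by simp [g, hf0]
  have hg'0 : gradient g 0 = 0 := by simp [(hg' 0).gradient, hgrad0]
  have hH0 : gradient (fun x => (L - m) * (‖x‖ ^ 2 / 2) - g x) 0 = 0 := by
    rw [gradient_mul_half_norm_sq_sub (hg 0), hg'0]
    simp
  simp only [hFm, hFL]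
  exact sum_inner_rescaled_delayed_nonneg (lyapunov_sub_le hg hfm hκ hfL)
    (lyapunov_nonneg hg hfm hκ hfL hg0 hg'0) (by simp [lyapunov, hg0, hg'0]) hH0 hρ0 hρ1 ν zb T

theorem delayed_dynamic_iqc
    (d : ℕ) (m L ρ : ℝ) (hm : 0 ≤ m) (hmL : m < L) (hρ0 : 0 < ρ) (hρ1 : ρ ≤ 1)
    (ν : ℕ) (hν : 1 ≤ ν)
    (f : EuclideanSpace ℝ (Fin d) → ℝ) (hf : Differentiable ℝ f)
    (hfm : ConvexOn ℝ Set.univ (fun x => f x - m * (‖x‖ ^ 2 / 2)))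
    (hfL : ConvexOn ℝ Set.univ (fun x => L * (‖x‖ ^ 2 / 2) - f x))
    (hf0 : f 0 = 0) (hgrad0 : gradient f 0 = 0)
    (Fm FL : ℕ → EuclideanSpace ℝ (Fin d) → EuclideanSpace ℝ (Fin d))
    (hFm : ∀ t z, Fm t z =
      (ρ ^ t)⁻¹ • gradient (fun x => f x - m * (‖x‖ ^ 2 / 2)) (ρ ^ t • z))
    (hFL : ∀ t z, FL t z =
      (ρ ^ t)⁻¹ • gradient (fun x => L * (‖x‖ ^ 2 / 2) - f x) (ρ ^ t • z)) :
    ∀ (zb : ℕ → EuclideanSpace ℝ (Fin d)) (T : ℕ), 1 ≤ T →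
      0 ≤ ∑ t ∈ Finset.range T,
        ⟪Fm t (zb t), FL t (zb t) -
          ρ ^ ν • (if ν ≤ t then FL (t - ν) (zb (t - ν)) else 0)⟫ :=
  delayed_dynamic_iqc_general d m L ρ hmL hρ0 hρ1 ν f hf hfm hfL hf0 hgrad0 Fm FL hFm hFL
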